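/- The moment generating function of a Nakagami-m random variable Z evaluated at −s (i.e., the Laplace transform E[e^{−sZ}]) equals (1/√π) Γ(m + 1/2) U(m, 1/2, s²Ω/(4m)) for s > 0, where U is Tricomi's confluent hypergeometric function. -/

import Mathlib

open Real MeasureTheory Set

/-!
Both sides reduce to `∫₀^∞ e^{-u} u^{m-1/2} (u + x)^{-m} du` with `x = s²Ω/(4m)`.
On the left, subordinate `e^{-sz}` to Gaussians,
`√π e^{-p} = ∫₀^∞ u^{-1/2} e^{-u - p²/(4u)} du` (the Cauchy–Schlömilch substitution
`w = t - c/t` in the Gaussian integral), and integrate out `z`, a Gamma integral in `z²`.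
On the right, write `Γ(m + 1/2) (1 + t)^{-(m+1/2)}` as a Gamma integral and integrate out `t`.
-/

/-- Tricomi's confluent hypergeometric function (integral representation):
U(a, b, z) = (1/Γ(a)) ∫_0^∞ e^{-zt} t^{a-1} (1+t)^{b-a-1} dt. -/
noncomputable def tricomiU (a b z : ℝ) : ℝ :=
  (1 / Real.Gamma a) * ∫ t in Ioi (0 : ℝ), Real.exp (-z * t) * t ^ (a - 1) * (1 + t) ^ (b - a - 1)

theorem integral_integral_swap_of_nonneg {α β : Type*} [MeasurableSpace α] [MeasurableSpace β]
    {μ : Measure α} {ν : Measure β} [SFinite μ] [SFinite ν] {f : α → β → ℝ}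
    (hf : AEStronglyMeasurable (Function.uncurry f) (μ.prod ν))
    (hf_nonneg : ∀ᵐ y ∂ν, ∀ᵐ x ∂μ, 0 ≤ f x y)
    (hf_sec : ∀ᵐ y ∂ν, Integrable (fun x ↦ f x y) μ)
    (hf_int : Integrable (fun y ↦ ∫ x, f x y ∂μ) ν) :
    ∫ x, ∫ y, f x y ∂ν ∂μ = ∫ y, ∫ x, f x y ∂μ ∂ν := by
  refine integral_integral_swap ((integrable_prod_iff' hf).2 ⟨hf_sec, hf_int.congr ?_⟩)
  filter_upwards [hf_nonneg] with y hy
  exact integral_congr_ae (hy.mono fun x hx ↦ (Real.norm_of_nonneg hx).symm)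

theorem integral_comp_const_div_Ioi {c : ℝ} (hc : 0 < c) (g : ℝ → ℝ) :
    ∫ t in Ioi 0, c / t ^ 2 * g (c / t) = ∫ t in Ioi 0, g t := by
  have himage : (c / ·) '' Ioi 0 = Ioi (0 : ℝ) := by
    refine Subset.antisymm (image_subset_iff.2 fun t ht ↦ div_pos hc ht) fun t ht ↦ ?_
    exact ⟨c / t, div_pos hc ht, div_div_cancel₀ hc.ne'⟩
  have hderiv (t : ℝ) (ht : t ∈ Ioi 0) :
      HasDerivWithinAt (c / ·) (-(c / t ^ 2)) (Ioi 0) t := by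
    simpa [div_eq_mul_inv] using ((hasDerivAt_inv (ne_of_gt ht)).const_mul c).hasDerivWithinAt
  have hinj : InjOn (c / ·) (Ioi (0 : ℝ)) := fun a _ b _ hab ↦ by
    simpa [div_eq_mul_inv, hc.ne'] using hab
  have := integral_image_eq_integral_abs_deriv_smul measurableSet_Ioi hderiv hinj g
  rw [himage] at this
  rw [this]
  refine setIntegral_congr_fun measurableSet_Ioi fun t ht ↦ ?_
  rw [abs_neg, abs_of_pos (by have : 0 < t := ht; positivity), smul_eq_mul]

theorem image_sub_const_div_Ioi {c : ℝ} (hc : 0 < c) : (fun t ↦ t - c / t) '' Ioi 0 = univ := by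
  refine eq_univ_of_forall fun w ↦ ?_
  set r := √(w ^ 2 + 4 * c)
  have hr : r ^ 2 = w ^ 2 + 4 * c := sq_sqrt (by positivity)
  have hwr : |w| < r := by
    rw [← sqrt_sq_eq_abs]; exact sqrt_lt_sqrt (sq_nonneg w) (by linarith)
  have hpos : 0 < w + r := by linarith [neg_abs_le w]
  -- the positive root of `t ^ 2 - w * t - c`
  refine ⟨(w + r) / 2, half_pos hpos, ?_⟩
  field_simp
  nlinarith

theorem strictMonoOn_sub_const_div {c : ℝ} (hc : 0 < c) :
    StrictMonoOn (fun t ↦ t - c / t) (Ioi 0) := fun a ha b _ hab ↦ by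
  have := div_lt_div_of_pos_left hc ha hab
  dsimp only; linarith

theorem hasDerivAt_sub_const_div (c : ℝ) {t : ℝ} (ht : t ≠ 0) :
    HasDerivAt (fun t ↦ t - c / t) (1 + c / t ^ 2) t :=
  ((hasDerivAt_id t).sub ((hasDerivAt_inv ht).const_mul c)).congr_deriv (by ring)

theorem integrableOn_comp_sub_const_div_Ioi_iff {c : ℝ} (hc : 0 < c) (g : ℝ → ℝ) :
    IntegrableOn (fun t ↦ (1 + c / t ^ 2) * g (t - c / t)) (Ioi 0) ↔ Integrable g := by
  have := integrableOn_image_iff_integrableOn_abs_deriv_smul measurableSet_Ioi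
    (fun t ht ↦ (hasDerivAt_sub_const_div c (ne_of_gt ht)).hasDerivWithinAt)
    (strictMonoOn_sub_const_div hc).injOn g
  have habs (t : ℝ) : |1 + c / t ^ 2| = 1 + c / t ^ 2 := abs_of_pos (by positivity)
  simp only [image_sub_const_div_Ioi hc, integrableOn_univ, smul_eq_mul, habs] at this
  exact this.symm

theorem integral_comp_sub_const_div_Ioi {c : ℝ} (hc : 0 < c) (g : ℝ → ℝ) :
    ∫ t in Ioi 0, (1 + c / t ^ 2) * g (t - c / t) = ∫ w, g w := by
  have := integral_image_eq_integral_abs_deriv_smul measurableSet_Ioi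
    (fun t ht ↦ (hasDerivAt_sub_const_div c (ne_of_gt ht)).hasDerivWithinAt)
    (strictMonoOn_sub_const_div hc).injOn g
  have habs (t : ℝ) : |1 + c / t ^ 2| = 1 + c / t ^ 2 := abs_of_pos (by positivity)
  simp only [image_sub_const_div_Ioi hc, Measure.restrict_univ, smul_eq_mul, habs] at this
  exact this.symm

theorem integral_exp_neg_sq_sub_div_sq {c : ℝ} (hc : 0 < c) :
    ∫ t in Ioi 0, exp (-t ^ 2 - c ^ 2 / t ^ 2) = √π / 2 * exp (-(2 * c)) := by
  set E : ℝ → ℝ := fun t ↦ exp (-t ^ 2 - c ^ 2 / t ^ 2)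
  set K : ℝ → ℝ := fun t ↦ (1 + c / t ^ 2) * exp (-(t - c / t) ^ 2)
  have hgauss : Integrable fun w : ℝ ↦ exp (-w ^ 2) := by
    simpa using integrable_exp_neg_mul_sq one_pos
  have hK_int : IntegrableOn K (Ioi 0) :=
    (integrableOn_comp_sub_const_div_Ioi_iff hc fun w ↦ exp (-w ^ 2)).2 hgauss
  have hK : ∫ t in Ioi 0, K t = √π := by
    simpa [K, integral_comp_sub_const_div_Ioi hc fun w ↦ exp (-w ^ 2)] using integral_gaussian 1
  have hKE (t : ℝ) (ht : t ∈ Ioi 0) : K t = exp (2 * c) * (E t + c / t ^ 2 * E (c / t)) := by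
    have : t ≠ 0 := ne_of_gt ht
    have h₁ : -(t - c / t) ^ 2 = 2 * c + (-t ^ 2 - c ^ 2 / t ^ 2) := by field_simp; ring
    have h₂ : -(c / t) ^ 2 - c ^ 2 / (c / t) ^ 2 = -t ^ 2 - c ^ 2 / t ^ 2 := by field_simp; ring
    simp only [K, E, h₁, h₂, exp_add]
    ring
  have hE_int : IntegrableOn E (Ioi 0) := by
    refine (hK_int.const_mul (exp (-(2 * c)))).mono' (by fun_prop) ?_
    filter_upwards [ae_restrict_mem measurableSet_Ioi] with t ht
    rw [norm_of_nonneg (exp_nonneg _), hKE t ht, ← mul_assoc, ← exp_add, neg_add_cancel, exp_zero,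
      one_mul, le_add_iff_nonneg_right]
    exact mul_nonneg (div_nonneg hc.le (sq_nonneg t)) (exp_nonneg _)
  have hE_inv_int : IntegrableOn (fun t ↦ c / t ^ 2 * E (c / t)) (Ioi 0) := by
    refine IntegrableOn.congr_fun ((hK_int.const_mul (exp (-(2 * c)))).sub hE_int)
      (fun t ht ↦ ?_) measurableSet_Ioi
    simp only [Pi.sub_apply, hKE t ht, ← mul_assoc, ← exp_add, neg_add_cancel, exp_zero, one_mul,
      add_sub_cancel_left]
  have : √π = exp (2 * c) * (2 * ∫ t in Ioi 0, E t) := by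
    rw [← hK, setIntegral_congr_fun measurableSet_Ioi hKE, integral_const_mul,
      integral_add hE_int hE_inv_int, integral_comp_const_div_Ioi hc]
    ring
  rw [this, exp_neg]
  field_simp

theorem integral_rpow_neg_half_mul_exp_neg_sub_div {p : ℝ} (hp : 0 < p) :
    ∫ u in Ioi 0, u ^ (-1 / 2 : ℝ) * exp (-u - p ^ 2 / (4 * u)) = √π * exp (-p) := by
  rw [← integral_comp_rpow_Ioi_of_pos two_pos]
  have (t : ℝ) (ht : t ∈ Ioi 0) :
      ((2 : ℝ) * t ^ ((2 : ℝ) - 1)) • ((t ^ (2 : ℝ)) ^ (-1 / 2 : ℝ) *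
        exp (-t ^ (2 : ℝ) - p ^ 2 / (4 * t ^ (2 : ℝ)))) =
      2 * exp (-t ^ 2 - (p / 2) ^ 2 / t ^ 2) := by
    have ht : 0 < t := ht
    rw [← rpow_mul ht.le, rpow_two, smul_eq_mul]
    norm_num [rpow_neg_one]
    field_simp
    ring_nf
  rw [setIntegral_congr_fun measurableSet_Ioi this, integral_const_mul,
    integral_exp_neg_sq_sub_div_sq (half_pos hp)]
  field_simp

theorem integral_rpow_mul_exp_neg_mul_Ioi_eq_Gamma_mul_rpow_neg {a r : ℝ} (ha : 0 < a)
    (hr : 0 < r) : ∫ t in Ioi 0, t ^ (a - 1) * exp (-(r * t)) = Gamma a * r ^ (-a) := by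
  rw [integral_rpow_mul_exp_neg_mul_Ioi ha hr, one_div, inv_rpow hr.le, rpow_neg hr.le, mul_comm]

theorem integrableOn_rpow_mul_exp_neg_mul_Ioi {a r : ℝ} (ha : 0 < a) (hr : 0 < r) :
    IntegrableOn (fun t ↦ t ^ (a - 1) * exp (-(r * t))) (Ioi 0) := by
  simpa only [rpow_one, neg_mul] using
    integrableOn_rpow_mul_exp_neg_mul_rpow (s := a - 1) (by linarith) one_pos hr

theorem integral_rpow_mul_exp_neg_mul_sq_Ioi {m β : ℝ} (hm : 0 < m) (hβ : 0 < β) :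
    ∫ z in Ioi 0, z ^ (2 * m - 1) * exp (-β * z ^ 2) = Gamma m / (2 * β ^ m) := by
  simp_rw [← rpow_two]
  rw [integral_rpow_mul_exp_neg_mul_rpow two_pos (by linarith) hβ,
    show -(2 * m - 1 + 1) / 2 = -m by ring, show (2 * m - 1 + 1) / 2 = m by ring, rpow_neg hβ.le]
  ring

theorem integrableOn_exp_neg_mul_rpow_mul_add_rpow_neg {s a x : ℝ} (hs : -1 < s) (ha : 0 ≤ a)
    (hx : 0 < x) : IntegrableOn (fun u ↦ exp (-u) * u ^ s * (u + x) ^ (-a)) (Ioi 0) := by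
  have hGamma : IntegrableOn (fun u ↦ exp (-u) * u ^ s) (Ioi 0) := by
    simpa using GammaIntegral_convergent (s := s + 1) (by linarith)
  refine (hGamma.mul_const (x ^ (-a))).mono' (by fun_prop) ?_
  filter_upwards [ae_restrict_mem measurableSet_Ioi] with u (hu : 0 < u)
  rw [norm_of_nonneg (by positivity)]
  exact mul_le_mul_of_nonneg_left
    (rpow_le_rpow_of_nonpos hx (by linarith : x ≤ u + x) (by linarith : -a ≤ 0)) (by positivity)

theorem Gamma_mul_tricomiU {a b x : ℝ} (ha : 0 < a) (hb : b < a + 1) (hx : 0 < x) :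
    Gamma (a - b + 1) * tricomiU a b x =
      ∫ u in Ioi 0, exp (-u) * u ^ (a - b) * (u + x) ^ (-a) := by
  set c := a - b + 1
  have hc : 0 < c := by simp only [c]; linarith
  let F : ℝ → ℝ → ℝ := fun t v ↦ exp (-x * t) * t ^ (a - 1) * (v ^ (c - 1) * exp (-((1 + t) * v)))
  have hF (t v : ℝ) : F t v = v ^ (c - 1) * exp (-v) * (t ^ (a - 1) * exp (-((x + v) * t))) := by
    have : exp (-x * t) * exp (-((1 + t) * v)) = exp (-v) * exp (-((x + v) * t)) := by
      rw [← exp_add, ← exp_add]; ring_nf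
    linear_combination (t ^ (a - 1) * v ^ (c - 1)) * this
  have hF_v (t : ℝ) (ht : t ∈ Ioi 0) :
      ∫ v in Ioi 0, F t v = Gamma c * (exp (-x * t) * t ^ (a - 1) * (1 + t) ^ (b - a - 1)) := by
    have ht : 0 < t := ht
    rw [integral_const_mul, integral_rpow_mul_exp_neg_mul_Ioi_eq_Gamma_mul_rpow_neg hc (by linarith),
      show -c = b - a - 1 by ring]
    ring
  have hF_t (v : ℝ) (hv : v ∈ Ioi 0) :
      ∫ t in Ioi 0, F t v = Gamma a * (exp (-v) * v ^ (a - b) * (v + x) ^ (-a)) := by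
    have hv : 0 < v := hv
    simp_rw [hF]
    rw [integral_const_mul, integral_rpow_mul_exp_neg_mul_Ioi_eq_Gamma_mul_rpow_neg ha (by linarith),
      show c - 1 = a - b by ring, add_comm x]
    ring
  have hswap : ∫ t in Ioi 0, ∫ v in Ioi 0, F t v = ∫ v in Ioi 0, ∫ t in Ioi 0, F t v := by
    refine integral_integral_swap_of_nonneg (by fun_prop) ?_ ?_ ?_
    · filter_upwards [ae_restrict_mem measurableSet_Ioi] with v (hv : 0 < v)
      filter_upwards [ae_restrict_mem measurableSet_Ioi] with t (ht : 0 < t)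
      positivity
    · filter_upwards [ae_restrict_mem measurableSet_Ioi] with v (hv : 0 < v)
      simp_rw [hF]
      exact (integrableOn_rpow_mul_exp_neg_mul_Ioi ha (by linarith : 0 < x + v)).const_mul _
    · refine IntegrableOn.congr_fun ?_ (fun v hv ↦ (hF_t v hv).symm) measurableSet_Ioi
      exact (integrableOn_exp_neg_mul_rpow_mul_add_rpow_neg (by linarith) ha.le hx).const_mul _
  calc Gamma c * tricomiU a b x = (Gamma a)⁻¹ * ∫ t in Ioi 0, ∫ v in Ioi 0, F t v := by
        rw [tricomiU, setIntegral_congr_fun measurableSet_Ioi hF_v, integral_const_mul]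
        ring
    _ = ∫ u in Ioi 0, exp (-u) * u ^ (a - b) * (u + x) ^ (-a) := by
        rw [hswap, setIntegral_congr_fun measurableSet_Ioi hF_t, integral_const_mul,
          inv_mul_cancel_left₀ (Gamma_pos_of_pos ha).ne']

theorem sqrt_pi_mul_integral_exp_neg_mul_mul_rpow_mul_exp_neg_mul_sq {m b s : ℝ} (hm : 0 < m)
    (hb : 0 < b) (hs : 0 < s) :
    √π * ∫ z in Ioi 0, exp (-s * z) * (z ^ (2 * m - 1) * exp (-b * z ^ 2)) =
      Gamma m / (2 * b ^ m) *
        ∫ u in Ioi 0, exp (-u) * u ^ (m - 1 / 2) * (u + s ^ 2 / (4 * b)) ^ (-m) := by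
  set x := s ^ 2 / (4 * b) with hx_def
  have hx : 0 < x := by positivity
  let F : ℝ → ℝ → ℝ := fun z u ↦
    z ^ (2 * m - 1) * exp (-b * z ^ 2) * (u ^ (-1 / 2 : ℝ) * exp (-u - (s * z) ^ 2 / (4 * u)))
  have hF (z u : ℝ) (hu : u ≠ 0) : F z u = u ^ (-1 / 2 : ℝ) * exp (-u) *
      (z ^ (2 * m - 1) * exp (-(b * (u + x) / u) * z ^ 2)) := by
    have : exp (-b * z ^ 2) * exp (-u - (s * z) ^ 2 / (4 * u)) =
        exp (-u) * exp (-(b * (u + x) / u) * z ^ 2) := by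
      rw [← exp_add, ← exp_add, hx_def]
      congr 1
      field_simp
      ring
    linear_combination (z ^ (2 * m - 1) * u ^ (-1 / 2 : ℝ)) * this
  have hF_u (z : ℝ) (hz : z ∈ Ioi 0) :
      ∫ u in Ioi 0, F z u = √π * (exp (-s * z) * (z ^ (2 * m - 1) * exp (-b * z ^ 2))) := by
    have hz : 0 < z := hz
    rw [integral_const_mul, integral_rpow_neg_half_mul_exp_neg_sub_div (by positivity)]
    ring_nf
  have hF_z (u : ℝ) (hu : u ∈ Ioi 0) : ∫ z in Ioi 0, F z u =
      Gamma m / (2 * b ^ m) * (exp (-u) * u ^ (m - 1 / 2) * (u + x) ^ (-m)) := by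
    have hu : 0 < u := hu
    rw [setIntegral_congr_fun measurableSet_Ioi fun z _ ↦ hF z u hu.ne', integral_const_mul,
      integral_rpow_mul_exp_neg_mul_sq_Ioi hm (by positivity), div_rpow (by positivity) hu.le,
      mul_rpow hb.le (by positivity), rpow_neg (by positivity : 0 ≤ u + x),
      show m - 1 / 2 = -1 / 2 + m by ring, rpow_add hu]
    field_simp
  have hswap : ∫ z in Ioi 0, ∫ u in Ioi 0, F z u = ∫ u in Ioi 0, ∫ z in Ioi 0, F z u := by
    refine integral_integral_swap_of_nonneg (by fun_prop) ?_ ?_ ?_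
    · filter_upwards [ae_restrict_mem measurableSet_Ioi] with u (hu : 0 < u)
      filter_upwards [ae_restrict_mem measurableSet_Ioi] with z (hz : 0 < z)
      positivity
    · filter_upwards [ae_restrict_mem measurableSet_Ioi] with u (hu : 0 < u)
      refine IntegrableOn.congr_fun ?_ (fun z _ ↦ (hF z u hu.ne').symm) measurableSet_Ioi
      exact (integrableOn_rpow_mul_exp_neg_mul_sq (by positivity) (by linarith)).const_mul _
    · refine IntegrableOn.congr_fun ?_ (fun u hu ↦ (hF_z u hu).symm) measurableSet_Ioi
      exact (integrableOn_exp_neg_mul_rpow_mul_add_rpow_neg (by linarith) hm.le hx).const_mul _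
  rw [← integral_const_mul, ← setIntegral_congr_fun measurableSet_Ioi hF_u, hswap,
    setIntegral_congr_fun measurableSet_Ioi hF_z, integral_const_mul]

/-- The Laplace transform of a Nakagami-m random variable:
∫_0^∞ e^{-sz} f(z) dz = Γ(m + 1/2) U(m, 1/2, s²Ω/(4m)) / √π. -/
theorem nakagami_laplace_transform (m Ω s : ℝ) (hm : 0 < m) (hΩ : 0 < Ω) (hs : 0 < s) :
    ∫ z in Ioi (0 : ℝ),
      Real.exp (-s * z) *
        (2 * m ^ m * z ^ (2 * m - 1) / (Ω ^ m * Real.Gamma m) * Real.exp (-m * z ^ 2 / Ω)) =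
    Real.Gamma (m + 1 / 2) * tricomiU m (1 / 2) (s ^ 2 * Ω / (4 * m)) / Real.sqrt π := by
  have hb : 0 < m / Ω := div_pos hm hΩ
  have hΓ : Gamma m ≠ 0 := (Gamma_pos_of_pos hm).ne'
  have hbm : (m / Ω) ^ m ≠ 0 := (rpow_pos_of_pos hb m).ne'
  have hL := sqrt_pi_mul_integral_exp_neg_mul_mul_rpow_mul_exp_neg_mul_sq hm hb hs
  have hU := Gamma_mul_tricomiU hm (by linarith : (1 / 2 : ℝ) < m + 1)
    (by positivity : 0 < s ^ 2 * Ω / (4 * m))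
  rw [show s ^ 2 / (4 * (m / Ω)) = s ^ 2 * Ω / (4 * m) by field_simp, ← hU,
    show m - 1 / 2 + 1 = m + 1 / 2 by ring] at hL
  calc _ = 2 * (m / Ω) ^ m / Gamma m *
        ∫ z in Ioi 0, exp (-s * z) * (z ^ (2 * m - 1) * exp (-(m / Ω) * z ^ 2)) := by
        rw [← integral_const_mul, div_rpow hm.le hΩ.le]
        refine setIntegral_congr_fun measurableSet_Ioi fun z _ ↦ ?_
        ring_nf
    _ = _ := by
        rw [eq_div_iff (sqrt_pos.2 pi_pos).ne', mul_comm, mul_left_comm, hL]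
        field_simp
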